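/- For all integers i, j, k and every nonzero complex number z, there is an equality (−1)^k ⟨j⟩ [z; i+k] + ⟨k⟩ [z; i−j] = ⟨j+k⟩ [z; i]. -/

import Mathlib

/-- The super quantum integer `⟨n⟩ = (q^{−n} − (−q)^n)/(q + q^{−1})` for `n ∈ ℤ`. -/
noncomputable def sInt (q : ℂ) (n : ℤ) : ℂ := (q ^ (-n) - (-q) ^ n) / (q + q⁻¹)

/-- The bracket `[z; n] = (z q^n − z^{−1} (−q)^{−n})/(q − q^{−1})`. -/
noncomputable def brk (q z : ℂ) (n : ℤ) : ℂ := (z * q ^ n - z⁻¹ * (-q) ^ (-n)) / (q - q⁻¹)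

/-- For all integers `i, j, k` and nonzero `z`:
`(−1)^k ⟨j⟩ [z; i+k] + ⟨k⟩ [z; i−j] = ⟨j+k⟩ [z; i]`. -/
theorem statement3 (q : ℂ) (hq : q ≠ 0) (hq4 : q ^ 4 ≠ 1) (z : ℂ) (hz : z ≠ 0)
    (i j k : ℤ) :
    (-1 : ℂ) ^ k * sInt q j * brk q z (i + k) + sInt q k * brk q z (i - j)
      = sInt q (j + k) * brk q z i := by
  have hq' : (-q) ≠ 0 := neg_ne_zero.mpr hq
  have hq2 : q ^ 2 ≠ 1 := by
    intro h
    apply hq4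
    have : q ^ 4 = (q ^ 2) ^ 2 := by ring
    rw [this, h]; ring
  have hq2' : q ^ 2 ≠ -1 := by
    intro h
    apply hq4
    have : q ^ 4 = (q ^ 2) ^ 2 := by ring
    rw [this, h]; ring
  have hs : q + q⁻¹ ≠ 0 := by
    intro h
    apply hq2'
    have := congrArg (· * q) h
    field_simp at this
    linear_combination this
  have hd : q - q⁻¹ ≠ 0 := by
    intro h
    apply hq2
    have := congrArg (· * q) h
    field_simp at this
    linear_combination this
  have hm : (-1 : ℂ) ^ k = (-q) ^ k * (q ^ k)⁻¹ := by
    have h1 : (-q) * q⁻¹ = -1 := by field_simp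
    rw [← inv_zpow, ← mul_zpow, h1]
  simp only [sInt, brk, zpow_neg, zpow_add₀ hq, zpow_sub₀ hq, zpow_add₀ hq',
    zpow_sub₀ hq', hm]
  have hA : q ^ i ≠ 0 := zpow_ne_zero _ hq
  have hB : q ^ j ≠ 0 := zpow_ne_zero _ hq
  have hC : q ^ k ≠ 0 := zpow_ne_zero _ hq
  have hP : (-q) ^ i ≠ 0 := zpow_ne_zero _ hq'
  have hQ : (-q) ^ j ≠ 0 := zpow_ne_zero _ hq'
  have hR : (-q) ^ k ≠ 0 := zpow_ne_zero _ hq'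
  generalize q ^ i = A at *
  generalize q ^ j = B at *
  generalize q ^ k = C at *
  generalize (-q) ^ i = P at *
  generalize (-q) ^ j = Q at *
  generalize (-q) ^ k = R at *
  have hSD : (q + q⁻¹) * (q - q⁻¹) ≠ 0 := mul_ne_zero hs hd
  simp only [mul_div_assoc', div_mul_div_comm]
  rw [show q + q⁻¹ = q + q⁻¹ from rfl]
  generalize hS : q + q⁻¹ = S at hs ⊢
  generalize hD : q - q⁻¹ = D at hd ⊢
  field_simp [hs, hd, hA, hB, hC, hP, hQ, hR, hz]
  have hd1 : C * B * S * (z * (P * R)) * D ≠ 0 := by apply_rules [mul_ne_zero]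
  have hd2 : C * S * (B * (z * P)) * D ≠ 0 := by apply_rules [mul_ne_zero]
  have hd3 : B * C * S * (z * P) * D ≠ 0 := by apply_rules [mul_ne_zero]
  ring
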